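/- Let E be a finite ground set, 𝒫 ⊆ 2^E nonempty, π : 𝒫 → (−∞,1], and ρ ∈ [0,1]^E fulfilling condition (⋆). Consider a complete run of the decomposition algorithm of length ℓ starting from (π,ρ), i.e., a run with max_{P∈𝒫} π^(ℓ+1)_P ≤ 0. Define z : 2^E → ℝ by z_S := Σ_{k∈[ℓ] : S^(k)=S} ε^(k) for S ≠ ∅ and z_∅ := 1 − Σ_{k=1}^{ℓ} ε^(k). Then z ∈ Z_π, and moreover Σ_{S : e∈S} z_S ≤ ρ_e for all e ∈ E. -/
import Mathlib


open Finset

variable {α : Type*} [Fintype α] [DecidableEq α]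

/-- The dominance relation `P ⊑_{π,ρ} Q`. -/
def Dominates (π : Finset α → ℝ) (ρ : α → ℝ) (P Q : Finset α) : Prop :=
  P = Q ∨ (π P < π Q ∧ π P ≤ π Q - ∑ e ∈ Q \ P, ρ e)

/-- `P` is non-dominated (w.r.t. `π` and `ρ`) in `PP'`. -/
def NonDominated (π : Finset α → ℝ) (ρ : α → ℝ) (PP' : Finset (Finset α)) (P : Finset α) : Prop :=
  P ∈ PP' ∧ ∀ Q ∈ PP', Q ≠ P → ¬ Dominates π ρ P Q

/-- `S` is an admissible support candidate (ASC) for `π` and `ρ`. -/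
def IsASC (PP : Finset (Finset α)) (π : Finset α → ℝ) (ρ : α → ℝ) (S : Finset α) : Prop :=
  (∀ e ∈ S, 0 < ρ e) ∧
  (∀ P ∈ PP, ∑ e ∈ P, ρ e = π P → (S ∩ P).card ≤ 1) ∧
  (∀ P, NonDominated π ρ (PP.filter fun Q => 0 < π Q) P → 1 ≤ (S ∩ P).card)

/-- The step size `ε_{π,ρ}(S)`: the minimum of `min_{e ∈ S} ρ e`, `max_{P ∈ PP} π P`, and
`δ_{π,ρ}(S) = inf{(π P − ∑_{e∈P} ρ e)/(1 − |P ∩ S|) : P ∈ PP, |P ∩ S| > 1}` (the latter set of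
values being empty if no such `P` exists). -/
noncomputable def epsVal (PP : Finset (Finset α)) (π : Finset α → ℝ) (ρ : α → ℝ)
    (S : Finset α) : ℝ :=
  sInf (ρ '' (S : Set α) ∪ {sSup (π '' (PP : Set (Finset α)))} ∪
    {x : ℝ | ∃ P ∈ PP, 1 < (P ∩ S).card ∧
      x = (π P - ∑ e ∈ P, ρ e) / (1 - ((P ∩ S).card : ℝ))})

/-- A run of the decomposition algorithm of length `ℓ` starting from `(π, ρ)`: residual
requirements `πs`, residual marginals `ρs`, chosen admissible support candidates `Ss` and step
sizes `εs`, indexed by iterations `k = 1, …, ℓ`. -/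
def IsRun (PP : Finset (Finset α)) (π : Finset α → ℝ) (ρ : α → ℝ) (ℓ : ℕ)
    (πs : ℕ → Finset α → ℝ) (ρs : ℕ → α → ℝ) (Ss : ℕ → Finset α) (εs : ℕ → ℝ) : Prop :=
  πs 1 = π ∧ ρs 1 = ρ ∧
  ∀ k, 1 ≤ k → k ≤ ℓ →
    (∃ P ∈ PP, 0 < πs k P) ∧
    IsASC PP (πs k) (ρs k) (Ss k) ∧
    εs k = epsVal PP (πs k) (ρs k) (Ss k) ∧
    (∀ e, ρs (k + 1) e = ρs k e - (if e ∈ Ss k then εs k else 0)) ∧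
    (∀ P, πs (k + 1) P = πs k P - εs k)


section Helpers
set_option linter.unusedSectionVars false


/-- the set whose inf is epsVal -/
def epsSet (PP : Finset (Finset α)) (p : Finset α → ℝ) (r : α → ℝ) (S : Finset α) : Set ℝ :=
  r '' (S : Set α) ∪ {sSup (p '' (PP : Set (Finset α)))} ∪
    {x : ℝ | ∃ P ∈ PP, 1 < (P ∩ S).card ∧
      x = (p P - ∑ e ∈ P, r e) / (1 - ((P ∩ S).card : ℝ))}

lemma epsSet_finite (PP : Finset (Finset α)) (p : Finset α → ℝ) (r : α → ℝ) (S : Finset α) :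
    (epsSet PP p r S).Finite := by
  apply Set.Finite.union
  · exact Set.Finite.union (S.finite_toSet.image r) (Set.finite_singleton _)
  · apply Set.Finite.subset (Set.Finite.image
      (fun P => (p P - ∑ e ∈ P, r e) / (1 - ((P ∩ S).card : ℝ))) PP.finite_toSet)
    rintro x ⟨P, hP, _, rfl⟩
    exact ⟨P, hP, rfl⟩

lemma epsSet_nonempty (PP : Finset (Finset α)) (p : Finset α → ℝ) (r : α → ℝ) (S : Finset α) :
    (epsSet PP p r S).Nonempty :=
  ⟨sSup (p '' (PP : Set (Finset α))), Or.inl (Or.inr rfl)⟩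

lemma epsVal_le {PP : Finset (Finset α)} {p : Finset α → ℝ} {r : α → ℝ} {S : Finset α}
    {x : ℝ} (hx : x ∈ epsSet PP p r S) : epsVal PP p r S ≤ x :=
  csInf_le (epsSet_finite PP p r S).bddBelow hx

lemma le_epsVal {PP : Finset (Finset α)} {p : Finset α → ℝ} {r : α → ℝ} {S : Finset α}
    {c : ℝ} (h : ∀ x ∈ epsSet PP p r S, c ≤ x) : c ≤ epsVal PP p r S :=
  le_csInf (epsSet_nonempty PP p r S) h

/-- there is a maximizer of p over PP and epsVal is below it -/
lemma epsVal_le_sSup {PP : Finset (Finset α)} (hPP : PP.Nonempty) (p : Finset α → ℝ)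
    (r : α → ℝ) (S : Finset α) :
    ∃ P ∈ PP, epsVal PP p r S ≤ p P ∧ ∀ Q ∈ PP, p Q ≤ p P := by
  have hfin : (p '' (PP : Set (Finset α))).Finite := PP.finite_toSet.image p
  have hne : (p '' (PP : Set (Finset α))).Nonempty := ⟨p hPP.choose, hPP.choose, hPP.choose_spec, rfl⟩
  have hmem := hne.csSup_mem hfin
  obtain ⟨P, hP, hPeq⟩ := hmem
  refine ⟨P, hP, ?_, ?_⟩
  · rw [hPeq]; exact epsVal_le (Or.inl (Or.inr rfl))
  · intro Q hQ; rw [hPeq]; exact le_csSup hfin.bddAbove ⟨Q, hQ, rfl⟩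

lemma epsVal_nonneg {PP : Finset (Finset α)} {p : Finset α → ℝ} {r : α → ℝ} {S : Finset α}
    (hS : ∀ e ∈ S, 0 < r e) (hstar : ∀ P ∈ PP, p P ≤ ∑ e ∈ P, r e)
    (hpos : ∃ P ∈ PP, 0 < p P) : 0 ≤ epsVal PP p r S := by
  apply le_epsVal
  rintro x ((⟨e, he, rfl⟩ | rfl) | hx)
  · exact (hS e he).le
  · obtain ⟨P, hP, hPpos⟩ := hpos
    refine le_trans hPpos.le (le_csSup (PP.finite_toSet.image p).bddAbove ⟨P, hP, rfl⟩)
  · obtain ⟨P, hP, hcard, rfl⟩ := hx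
    have h1 : p P - ∑ e ∈ P, r e ≤ 0 := by linarith [hstar P hP]
    have h2 : 1 - ((P ∩ S).card : ℝ) < 0 := by
      have : (1:ℝ) < ((P ∩ S).card : ℝ) := by exact_mod_cast hcard
      linarith
    exact div_nonneg_of_nonpos h1 h2.le

/-- telescoping sum over Icc -/
lemma sum_Icc_telescope (f : ℕ → ℝ) (k l : ℕ) (h : k ≤ l + 1) :
    ∑ j ∈ Finset.Icc k l, (f j - f (j + 1)) = f k - f (l + 1) := by
  induction l with
  | zero =>
    interval_cases k
    · simp
    · simp
  | succ l ih =>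
    rcases Nat.lt_or_ge k (l + 2) with hk | hk
    · have hk' : k ≤ l + 1 := by omega
      rw [Finset.sum_Icc_succ_top hk', ih hk']
      ring
    · have : Finset.Icc k (l+1) = ∅ := by
        apply Finset.Icc_eq_empty; omega
      have hke : k = l + 2 := by omega
      rw [this, hke]; simp


lemma zsum_eq {z : Finset α → ℝ} {εs : ℕ → ℝ} {Ss : ℕ → Finset α} {ℓ : ℕ}
    (hz : ∀ S : Finset α, S ≠ ∅ → z S = ∑ i ∈ (Finset.Icc 1 ℓ).filter (fun i => Ss i = S), εs i)
    (p : Finset α → Prop) [DecidablePred p] (hpe : ¬ p ∅) :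
    ∑ S ∈ Finset.univ.filter p, z S
      = ∑ j ∈ (Finset.Icc 1 ℓ).filter (fun j => p (Ss j)), εs j := by
  rw [← Finset.sum_fiberwise_of_maps_to (g := Ss)
      (s := (Finset.Icc 1 ℓ).filter (fun j => p (Ss j))) (t := Finset.univ.filter p)
      (fun j hj => Finset.mem_filter.mpr ⟨Finset.mem_univ _, (Finset.mem_filter.mp hj).2⟩) εs]
  apply Finset.sum_congr rfl
  intro S hS
  have hpS : p S := (Finset.mem_filter.mp hS).2
  have hSne : S ≠ ∅ := fun h => hpe (h ▸ hpS)
  rw [hz S hSne]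
  apply Finset.sum_congr _ (fun _ _ => rfl)
  ext j
  simp only [Finset.mem_filter]
  constructor
  · rintro ⟨hj, hS'⟩; exact ⟨⟨hj, hS' ▸ hpS⟩, hS'⟩
  · rintro ⟨⟨hj, _⟩, hS'⟩; exact ⟨hj, hS'⟩

end Helpers

/-- After a complete run of the decomposition algorithm (i.e., `max_{P∈PP} π^{(ℓ+1)}_P ≤ 0`),
the vector `z` with `z S = ∑_{k : S^(k) = S} ε^(k)` for `S ≠ ∅` and
`z ∅ = 1 − ∑_{k=1}^ℓ ε^(k)` lies in `Z_π`, and `∑_{S : e ∈ S} z S ≤ ρ e` for all `e`. -/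
theorem complete_run_yields_Zpi (PP : Finset (Finset α)) (hPP : PP.Nonempty)
    (π : Finset α → ℝ) (ρ : α → ℝ)
    (hπ1 : ∀ P ∈ PP, π P ≤ 1) (hρ : ∀ e, 0 ≤ ρ e ∧ ρ e ≤ 1)
    (hstar : ∀ P ∈ PP, π P ≤ ∑ e ∈ P, ρ e)
    (ℓ : ℕ) (πs : ℕ → Finset α → ℝ) (ρs : ℕ → α → ℝ) (Ss : ℕ → Finset α) (εs : ℕ → ℝ)
    (hrun : IsRun PP π ρ ℓ πs ρs Ss εs)
    (hcomplete : ∀ P ∈ PP, πs (ℓ + 1) P ≤ 0)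
    (z : Finset α → ℝ)
    (hz : ∀ S : Finset α, z S = if S = ∅ then 1 - ∑ i ∈ Finset.Icc 1 ℓ, εs i
      else ∑ i ∈ (Finset.Icc 1 ℓ).filter (fun i => Ss i = S), εs i) :
    (∀ S, 0 ≤ z S ∧ z S ≤ 1) ∧
    (∑ S : Finset α, z S = 1) ∧
    (∀ P ∈ PP, π P ≤ ∑ S ∈ Finset.univ.filter (fun S => (S ∩ P).Nonempty), z S) ∧
    (∀ e : α, ∑ S ∈ Finset.univ.filter (fun S => e ∈ S), z S ≤ ρ e) := by
  obtain ⟨hπs1, hρs1, hstep⟩ := hrun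
  -- the invariant: marginals stay nonnegative, condition (⋆) is preserved
  have inv : ∀ k, 1 ≤ k → k ≤ ℓ + 1 →
      (∀ e, 0 ≤ ρs k e) ∧ (∀ P ∈ PP, πs k P ≤ ∑ e ∈ P, ρs k e) := by
    intro k hk
    induction k, hk using Nat.le_induction with
    | base => intro _; rw [hπs1, hρs1]; exact ⟨fun e => (hρ e).1, hstar⟩
    | succ k hk ih =>
      intro hk1
      have hkl : k ≤ ℓ := by omega
      obtain ⟨hr, hs⟩ := ih (by omega)
      obtain ⟨h1, h2, h3, h4, h5⟩ := hstep k hk hkl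
      have hεnn : 0 ≤ εs k := by rw [h3]; exact epsVal_nonneg h2.1 hs h1
      have hεr : ∀ e ∈ Ss k, εs k ≤ ρs k e := by
        intro e he; rw [h3]; exact epsVal_le (Or.inl (Or.inl ⟨e, he, rfl⟩))
      constructor
      · intro e; rw [h4 e]
        by_cases hc : e ∈ Ss k
        · simp only [if_pos hc]; linarith [hεr e hc]
        · simp only [if_neg hc]; linarith [hr e]
      · intro P hP
        rw [h5 P]
        have hsum : ∑ e ∈ P, ρs (k+1) e
            = ∑ e ∈ P, ρs k e - ((P ∩ Ss k).card : ℝ) * εs k := by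
          rw [Finset.sum_congr rfl (fun e _ => h4 e), Finset.sum_sub_distrib]
          congr 1
          rw [Finset.sum_ite_mem, Finset.sum_const, nsmul_eq_mul]
        rw [hsum]
        rcases le_or_gt ((P ∩ Ss k).card) 1 with hc | hc
        · have hcc : ((P ∩ Ss k).card : ℝ) * εs k ≤ 1 * εs k := by
            apply mul_le_mul_of_nonneg_right _ hεnn; exact_mod_cast hc
          have := hs P hP
          linarith
        · have hδ : εs k ≤ (πs k P - ∑ e ∈ P, ρs k e) / (1 - ((P ∩ Ss k).card : ℝ)) := by
            rw [h3]; exact epsVal_le (Or.inr ⟨P, hP, hc, rfl⟩)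
          have hneg : 1 - ((P ∩ Ss k).card : ℝ) < 0 := by
            have : (1:ℝ) < ((P ∩ Ss k).card : ℝ) := by exact_mod_cast hc
            linarith
          rw [le_div_iff_of_neg hneg] at hδ
          nlinarith [hδ]
  -- step sizes are nonnegative
  have hεnn2 : ∀ k, 1 ≤ k → k ≤ ℓ → 0 ≤ εs k := by
    intro k h1 h2
    obtain ⟨g1, g2, g3, _, _⟩ := hstep k h1 h2
    rw [g3]; exact epsVal_nonneg g2.1 (inv k h1 (by omega)).2 g1
  -- telescoping for π
  have hπtel : ∀ (P : Finset α) (k : ℕ), 1 ≤ k → k ≤ ℓ + 1 →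
      ∑ j ∈ Finset.Icc k ℓ, εs j = πs k P - πs (ℓ+1) P := by
    intro P k hk hk1
    rw [← sum_Icc_telescope (fun j => πs j P) k ℓ hk1]
    apply Finset.sum_congr rfl
    intro j hj; rw [Finset.mem_Icc] at hj
    have := (hstep j (by omega) hj.2).2.2.2.2 P
    linarith
  -- telescoping for ρ
  have hρtel : ∀ (e : α) (k : ℕ), 1 ≤ k → k ≤ ℓ + 1 →
      ∑ j ∈ Finset.Icc k ℓ, (if e ∈ Ss j then εs j else 0) = ρs k e - ρs (ℓ+1) e := by
    intro e k hk hk1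
    rw [← sum_Icc_telescope (fun j => ρs j e) k ℓ hk1]
    apply Finset.sum_congr rfl
    intro j hj; rw [Finset.mem_Icc] at hj
    have := (hstep j (by omega) hj.2).2.2.2.1 e
    linarith
  -- main covering lemma
  have main : ∀ m k, 1 ≤ k → k + m = ℓ + 1 → ∀ P ∈ PP,
      πs k P ≤ ∑ j ∈ (Finset.Icc k ℓ).filter (fun j => (Ss j ∩ P).Nonempty), εs j := by
    intro m
    induction m with
    | zero =>
      intro k hk1 hke P hP
      have hkk : k = ℓ + 1 := by omega
      subst hkk
      rw [Finset.Icc_eq_empty (by omega)]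
      simpa using hcomplete P hP
    | succ m ihm =>
      intro k hk1 hke
      have hkl : k ≤ ℓ := by omega
      have inner : ∀ n (P : Finset α), P ∈ PP →
          (PP.filter (fun Q => πs k P < πs k Q)).card = n →
          πs k P ≤ ∑ j ∈ (Finset.Icc k ℓ).filter (fun j => (Ss j ∩ P).Nonempty), εs j := by
        intro n
        induction n using Nat.strong_induction_on with
        | _ n ihn =>
        intro P hP hcard
        by_cases hP0 : πs k P ≤ 0
        · refine le_trans hP0 (Finset.sum_nonneg ?_)
          intro j hj
          rw [Finset.mem_filter, Finset.mem_Icc] at hj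
          exact hεnn2 j (by omega) hj.1.2
        push_neg at hP0
        by_cases hSP : (Ss k ∩ P).Nonempty
        · -- step k covers P
          have hsplit : Finset.Icc k ℓ = insert k (Finset.Icc (k+1) ℓ) := by
            ext j; simp only [Finset.mem_Icc, Finset.mem_insert]; omega
          rw [hsplit, Finset.filter_insert, if_pos hSP,
            Finset.sum_insert (by simp [Finset.mem_filter, Finset.mem_Icc])]
          have hrec := (hstep k hk1 hkl).2.2.2.2 P
          have hih := ihm (k+1) (by omega) (by omega) P hP
          linarith
        · -- step k does not cover P: P is dominated by some Q
          have hA := (hstep k hk1 hkl).2.1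
          have hSP0 : (Ss k ∩ P) = ∅ := Finset.not_nonempty_iff_eq_empty.mp hSP
          have hnd : ¬ NonDominated (πs k) (ρs k) (PP.filter fun Q => 0 < πs k Q) P := by
            intro hnd
            have := hA.2.2 P hnd
            rw [hSP0] at this; simp at this
          rw [NonDominated] at hnd
          push_neg at hnd
          obtain ⟨Q, hQF, hQne, hdom⟩ := hnd (Finset.mem_filter.mpr ⟨hP, hP0⟩)
          have hdom' : P = Q ∨ (πs k P < πs k Q ∧ πs k P ≤ πs k Q - ∑ e ∈ Q \ P, ρs k e) := hdom
          rcases hdom' with rfl | ⟨hlt, hle⟩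
          · exact absurd rfl hQne
          have hQ : Q ∈ PP := (Finset.mem_filter.mp hQF).1
          -- inner induction hypothesis applies to Q
          have hQmem : Q ∈ PP.filter (fun R => πs k P < πs k R) :=
            Finset.mem_filter.mpr ⟨hQ, hlt⟩
          have hsubset : (PP.filter (fun R => πs k Q < πs k R)) ⊆
              (PP.filter (fun R => πs k P < πs k R)).erase Q := by
            intro R hR; rw [Finset.mem_filter] at hR
            rw [Finset.mem_erase, Finset.mem_filter]
            refine ⟨fun h => ?_, hR.1, lt_trans hlt hR.2⟩
            subst h; exact lt_irrefl _ hR.2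
          have hcardlt : (PP.filter (fun R => πs k Q < πs k R)).card < n := by
            have c1 := Finset.card_le_card hsubset
            have c2 := Finset.card_erase_of_mem hQmem
            have c3 : 0 < (PP.filter (fun R => πs k P < πs k R)).card :=
              Finset.card_pos.mpr ⟨Q, hQmem⟩
            omega
          have hQb := ihn _ hcardlt Q hQ rfl
          -- the amount of ε spent on steps covering Q but not P is at most ∑_{e ∈ Q\P} ρs k e
          set T := ((Finset.Icc k ℓ).filter (fun j => (Ss j ∩ Q).Nonempty)).filter
              (fun j => ¬ (Ss j ∩ P).Nonempty) with hT
          have hclaim : ∑ j ∈ T, εs j ≤ ∑ e ∈ Q \ P, ρs k e := by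
            have hεD : ∀ j ∈ T, εs j ≤ ∑ e ∈ Q \ P, (ρs j e - ρs (j+1) e) := by
              intro j hj
              rw [hT, Finset.mem_filter, Finset.mem_filter, Finset.mem_Icc] at hj
              obtain ⟨⟨⟨hjk, hjl⟩, hjQ⟩, hjP⟩ := hj
              have hj1 : 1 ≤ j := by omega
              have hrec := (hstep j hj1 hjl).2.2.2.1
              have heq : ∀ e ∈ Q \ P, ρs j e - ρs (j+1) e
                  = (if e ∈ Ss j then εs j else 0) := by
                intro e _; rw [hrec e]; ring
              rw [Finset.sum_congr rfl heq, Finset.sum_ite_mem, Finset.sum_const,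
                nsmul_eq_mul]
              have hne : ((Q \ P) ∩ Ss j).Nonempty := by
                obtain ⟨x, hx⟩ := hjQ
                rw [Finset.mem_inter] at hx
                refine ⟨x, Finset.mem_inter.mpr ⟨Finset.mem_sdiff.mpr ⟨hx.2, fun hxP => ?_⟩, hx.1⟩⟩
                exact hjP ⟨x, Finset.mem_inter.mpr ⟨hx.1, hxP⟩⟩
              have h1c : (1:ℝ) ≤ (((Q \ P) ∩ Ss j).card : ℝ) := by
                exact_mod_cast Finset.card_pos.mpr hne
              nlinarith [hεnn2 j hj1 hjl]
            calc ∑ j ∈ T, εs j ≤ ∑ j ∈ T, ∑ e ∈ Q \ P, (ρs j e - ρs (j+1) e) :=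
                  Finset.sum_le_sum hεD
              _ ≤ ∑ j ∈ Finset.Icc k ℓ, ∑ e ∈ Q \ P, (ρs j e - ρs (j+1) e) := by
                  apply Finset.sum_le_sum_of_subset_of_nonneg
                  · rw [hT]; exact (Finset.filter_subset _ _).trans (Finset.filter_subset _ _)
                  · intro j hj _
                    rw [Finset.mem_Icc] at hj
                    apply Finset.sum_nonneg
                    intro e _
                    have hrec := (hstep j (by omega) hj.2).2.2.2.1 e
                    rw [hrec]
                    split_ifs with h
                    · simp only [sub_sub_cancel]; exact hεnn2 j (by omega) hj.2
                    · simp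
              _ = ∑ e ∈ Q \ P, (ρs k e - ρs (ℓ+1) e) := by
                  rw [Finset.sum_comm]
                  exact Finset.sum_congr rfl fun e _ =>
                    sum_Icc_telescope (fun j => ρs j e) k ℓ (by omega)
              _ ≤ ∑ e ∈ Q \ P, ρs k e := by
                  apply Finset.sum_le_sum
                  intro e _
                  linarith [(inv (ℓ+1) (by omega) le_rfl).1 e]
          -- split the steps covering Q according to whether they cover P
          have hsplitQ := Finset.sum_filter_add_sum_filter_not
            ((Finset.Icc k ℓ).filter (fun j => (Ss j ∩ Q).Nonempty))
            (fun j => ¬ (Ss j ∩ P).Nonempty) εs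
          have hmono : ∑ j ∈ ((Finset.Icc k ℓ).filter (fun j => (Ss j ∩ Q).Nonempty)).filter
                (fun j => ¬ ¬ (Ss j ∩ P).Nonempty), εs j
              ≤ ∑ j ∈ (Finset.Icc k ℓ).filter (fun j => (Ss j ∩ P).Nonempty), εs j := by
            apply Finset.sum_le_sum_of_subset_of_nonneg
            · intro j hj
              rw [Finset.mem_filter, Finset.mem_filter] at hj
              rw [Finset.mem_filter]
              exact ⟨hj.1.1, not_not.mp hj.2⟩
            · intro j hj _
              rw [Finset.mem_filter, Finset.mem_Icc] at hj
              exact hεnn2 j (by omega) hj.1.2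
          rw [← hT] at hsplitQ
          linarith
      exact fun P hP => inner _ P hP rfl
  -- total mass of ε is at most 1
  have hsumle1 : ∑ j ∈ Finset.Icc 1 ℓ, εs j ≤ 1 := by
    rcases Nat.eq_zero_or_pos ℓ with rfl | hl
    · simp
    · obtain ⟨g1, g2, g3, g4, g5⟩ := hstep ℓ hl le_rfl
      obtain ⟨P, hP, hPle, hPmax⟩ := epsVal_le_sSup hPP (πs ℓ) (ρs ℓ) (Ss ℓ)
      have h6 : εs ℓ ≤ πs ℓ P := by rw [g3]; exact hPle
      have h7 : 0 ≤ πs (ℓ+1) P := by rw [g5 P]; linarith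
      rw [hπtel P 1 le_rfl (by omega), hπs1]
      linarith [hπ1 P hP]
  have hεsumnn : 0 ≤ ∑ j ∈ Finset.Icc 1 ℓ, εs j := by
    apply Finset.sum_nonneg
    intro j hj; rw [Finset.mem_Icc] at hj; exact hεnn2 j hj.1 hj.2
  -- the chosen ASCs are nonempty
  have hSsne : ∀ k, 1 ≤ k → k ≤ ℓ → Ss k ≠ ∅ := by
    intro k h1 h2
    obtain ⟨⟨P0, hP0, hP0pos⟩, hA, _, _, _⟩ := hstep k h1 h2
    have hFne : (PP.filter (fun Q => 0 < πs k Q)).Nonempty :=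
      ⟨P0, Finset.mem_filter.mpr ⟨hP0, hP0pos⟩⟩
    obtain ⟨P, hPF, hPmax⟩ := Finset.exists_max_image _ (πs k) hFne
    have hnd : NonDominated (πs k) (ρs k) (PP.filter fun Q => 0 < πs k Q) P := by
      refine ⟨hPF, fun Q hQ hQne hdom => ?_⟩
      have hdom' : P = Q ∨ (πs k P < πs k Q ∧ πs k P ≤ πs k Q - ∑ e ∈ Q \ P, ρs k e) := hdom
      rcases hdom' with rfl | ⟨hlt, _⟩
      · exact hQne rfl
      · exact absurd (hPmax Q hQ) (not_le.mpr hlt)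
    have hcardS := hA.2.2 P hnd
    intro hSe; rw [hSe] at hcardS; simp at hcardS
  have hz' : ∀ S : Finset α, S ≠ ∅ →
      z S = ∑ i ∈ (Finset.Icc 1 ℓ).filter (fun i => Ss i = S), εs i := by
    intro S hS; rw [hz S, if_neg hS]
  refine ⟨?_, ?_, ?_, ?_⟩
  · -- 0 ≤ z S ≤ 1
    intro S
    rw [hz S]
    split_ifs with h
    · constructor <;> linarith
    · constructor
      · apply Finset.sum_nonneg
        intro j hj; rw [Finset.mem_filter, Finset.mem_Icc] at hj
        exact hεnn2 j hj.1.1 hj.1.2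
      · refine le_trans ?_ hsumle1
        apply Finset.sum_le_sum_of_subset_of_nonneg (Finset.filter_subset _ _)
        intro j hj _; rw [Finset.mem_Icc] at hj; exact hεnn2 j hj.1 hj.2
  · -- total mass is 1
    have hfib : ∑ S ∈ Finset.univ,
        (∑ j ∈ ((Finset.Icc 1 ℓ).filter (fun j => Ss j = S)), εs j)
        = ∑ j ∈ Finset.Icc 1 ℓ, εs j :=
      Finset.sum_fiberwise_of_maps_to (fun j _ => Finset.mem_univ _) εs
    have hempty : ((Finset.Icc 1 ℓ).filter (fun j => Ss j = (∅ : Finset α))) = ∅ := by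
      rw [Finset.filter_eq_empty_iff]
      intro j hj; rw [Finset.mem_Icc] at hj
      exact hSsne j hj.1 hj.2
    have hsplit := (Finset.add_sum_erase Finset.univ
      (fun S => ∑ j ∈ ((Finset.Icc 1 ℓ).filter (fun j => Ss j = S)), εs j)
      (Finset.mem_univ (∅ : Finset α)))
    have hzsplit := (Finset.add_sum_erase Finset.univ z (Finset.mem_univ (∅ : Finset α)))
    have he1 : ∑ S ∈ Finset.univ.erase ∅, z S
        = ∑ S ∈ Finset.univ.erase ∅,
          ∑ j ∈ ((Finset.Icc 1 ℓ).filter (fun j => Ss j = S)), εs j := by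
      apply Finset.sum_congr rfl
      intro S hS
      exact hz' S (Finset.mem_erase.mp hS).1
    have hz0 : z ∅ = 1 - ∑ j ∈ Finset.Icc 1 ℓ, εs j := by rw [hz]; simp
    rw [← hzsplit, hz0, he1]
    simp only [hempty, Finset.sum_empty, zero_add] at hsplit
    rw [hsplit, hfib]
    ring
  · -- covering constraints
    intro P hP
    rw [zsum_eq hz' (fun S => (S ∩ P).Nonempty) (by simp)]
    have := main ℓ 1 le_rfl (by omega) P hP
    rw [hπs1] at this
    exact this
  · -- marginals
    intro e
    rw [zsum_eq hz' (fun S => e ∈ S) (by simp)]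
    rw [Finset.sum_filter]
    rw [hρtel e 1 le_rfl (by omega), hρs1]
    linarith [(inv (ℓ+1) (by omega) le_rfl).1 e]
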